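/- arXiv:2408.10725 — 5 statements merged into one kernel-verified Lean document; each statement's English description precedes it below -/
import Mathlib

section
/- Let (X,d) be a metric space, Ω ⊂ X a bounded set, D ⊂ X a nonempty set, and u : X → ℝ a continuous function. Define the 1-contact star set R₁*(D,Ω,u) := { x ∈ closure(Ω) : ∃ y ∈ D, inf_{z ∈ closure(Ω)} (u(z) + d(z,y)) = u(x) + d(x,y) }. Then u is 1-Lipschitz on R₁*(D,Ω,u), i.e. for all x, x' ∈ R₁*(D,Ω,u), |u(x) - u(x')| ≤ d(x,x'). -/
theorem sub_le_dist_of_isMinOn_add_dist {X : Type*} [PseudoMetricSpace X] {s : Set X}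
    {u : X → ℝ} {x x' y : X} (hmin : IsMinOn (fun z ↦ u z + dist z y) s x) (hx' : x' ∈ s) :
    u x - u x' ≤ dist x x' := by
  have hle : u x + dist x y ≤ u x' + dist x' y := hmin hx'
  have htri : dist x' y ≤ dist x x' + dist x y := dist_comm x x' ▸ dist_triangle x' x y
  linarith

theorem contact_set_one_lipschitz_general {X : Type*} [MetricSpace X]
    (Ω D : Set X)
    (u : X → ℝ) :
    ∀ x ∈ {x | x ∈ closure Ω ∧ ∃ y ∈ D, ∀ z ∈ closure Ω, u x + dist x y ≤ u z + dist z y},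
    ∀ x' ∈ {x | x ∈ closure Ω ∧ ∃ y ∈ D, ∀ z ∈ closure Ω, u x + dist x y ≤ u z + dist z y},
      |u x - u x'| ≤ dist x x' := by
  rintro x ⟨hx, _, _, hmin⟩ x' ⟨hx', _, _, hmin'⟩
  rw [abs_sub_le_iff]
  exact ⟨sub_le_dist_of_isMinOn_add_dist hmin hx',
    dist_comm x x' ▸ sub_le_dist_of_isMinOn_add_dist hmin' hx⟩

/-- On the 1-contact star set `R₁*(D,Ω,u)`, the function `u` is 1-Lipschitz.
A point `x` belongs to the contact set iff `x ∈ closure Ω` and there is a vertex `y ∈ D`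
such that `x` minimizes `z ↦ u z + dist z y` over `closure Ω` (i.e. the infimum is
attained at `x`). -/
theorem contact_set_one_lipschitz {X : Type*} [MetricSpace X]
    (Ω D : Set X) (hΩ : Bornology.IsBounded Ω) (hD : D.Nonempty)
    (u : X → ℝ) (hu : Continuous u) :
    ∀ x ∈ {x | x ∈ closure Ω ∧ ∃ y ∈ D, ∀ z ∈ closure Ω, u x + dist x y ≤ u z + dist z y},
    ∀ x' ∈ {x | x ∈ closure Ω ∧ ∃ y ∈ D, ∀ z ∈ closure Ω, u x + dist x y ≤ u z + dist z y},
      |u x - u x'| ≤ dist x x' :=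
  contact_set_one_lipschitz_general Ω D u
end

section
/- Let (X,d) be a geodesic metric space, Ω ⊂ X bounded, D ⊂ X nonempty, u continuous, u^d(y) := inf_{closure(Ω)} (u + d(·,y)). Suppose x ∈ R₁*(D,Ω,u), y ∈ D satisfy u(x) + d(x,y) = u^d(y), and γ : [0,1] → X is a geodesic with γ(0) = x, γ(1) = y. Then for every x' ∈ R₁*(D,Ω,u) lying on the image of γ, one has u(x') - u(x) = d(x',x). -/
/-!
Since `x'` lies on a geodesic from `x` to `y`, `d(x, x') + d(x', y) = d(x, y)`. As `x` minimises
`u + d(·, y)` on `closure Ω`, this gives `u x' - u x ≥ d(x', x)`. As `x'` minimises `u + d(·, y')`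
for some `y'`, the triangle inequality through `x'` gives `u x' - u x ≤ d(x', x)`.
-/

open Set

lemma dist_add_dist_eq_of_constSpeed {X : Type*} [PseudoMetricSpace X] {γ : ℝ → X}
    (hγ : ∀ s ∈ Icc (0:ℝ) 1, ∀ t ∈ Icc (0:ℝ) 1, dist (γ s) (γ t) = |s - t| * dist (γ 0) (γ 1))
    {t : ℝ} (ht : t ∈ Icc (0:ℝ) 1) :
    dist (γ 0) (γ t) + dist (γ t) (γ 1) = dist (γ 0) (γ 1) := by
  have h0 : (0:ℝ) ∈ Icc (0:ℝ) 1 := left_mem_Icc.2 zero_le_one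
  have h1 : (1:ℝ) ∈ Icc (0:ℝ) 1 := right_mem_Icc.2 zero_le_one
  rw [hγ 0 h0 t ht, hγ t ht 1 h1, abs_of_nonpos (by linarith [ht.1]),
    abs_of_nonpos (by linarith [ht.2])]
  ring

lemma isMinOn_of_eq_csInf_image {α β : Type*} [ConditionallyCompleteLattice β] {f : α → β}
    {s : Set α} {a : α}
    (hbdd : BddBelow (f '' s)) (ha : f a = sInf (f '' s)) : IsMinOn f s a :=
  fun _ hb => ha ▸ csInf_le hbdd (mem_image_of_mem f hb)

lemma sub_eq_dist_of_isMinOn_of_between {X : Type*} [PseudoMetricSpace X] {u : X → ℝ}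
    {s : Set X} {x z y y' : X} (hx : x ∈ s) (hz : z ∈ s)
    (hxmin : IsMinOn (fun w => u w + dist w y) s x)
    (hzmin : IsMinOn (fun w => u w + dist w y') s z)
    (hbetween : dist x z + dist z y = dist x y) :
    u z - u x = dist z x := by
  have hlower : u x + dist x y ≤ u z + dist z y := hxmin hz
  have hupper : u z + dist z y' ≤ u x + dist x y' := hzmin hx
  have htri : dist x y' ≤ dist x z + dist z y' := dist_triangle _ _ _
  rw [dist_comm z x]
  linarith

theorem contact_set_along_geodesic_general {X : Type*} [MetricSpace X]
    (Ω D : Set X)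
    (u : X → ℝ)
    (hbdd : ∀ y : X, BddBelow ((fun z => u z + dist z y) '' closure Ω))
    (ud : X → ℝ) (hud : ∀ y, ud y = sInf ((fun z => u z + dist z y) '' closure Ω))
    (x y : X)
    (hx : x ∈ {x | x ∈ closure Ω ∧ ∃ y' ∈ D, ud y' = u x + dist x y'})
    (hxy : u x + dist x y = ud y)
    (γ : ℝ → X) (hγ0 : γ 0 = x) (hγ1 : γ 1 = y)
    (hγ : ∀ s ∈ Set.Icc (0:ℝ) 1, ∀ t ∈ Set.Icc (0:ℝ) 1,
      dist (γ s) (γ t) = |s - t| * dist (γ 0) (γ 1)) :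
    ∀ x' ∈ {x | x ∈ closure Ω ∧ ∃ y' ∈ D, ud y' = u x + dist x y'},
      (∃ t ∈ Set.Icc (0:ℝ) 1, x' = γ t) → u x' - u x = dist x' x := by
  rintro x' ⟨hx'Ω, y', -, hy'⟩ ⟨t, ht, rfl⟩
  have hbetween := dist_add_dist_eq_of_constSpeed hγ ht
  rw [hγ0, hγ1] at hbetween
  exact sub_eq_dist_of_isMinOn_of_between hx.1 hx'Ω
    (isMinOn_of_eq_csInf_image (hbdd y) (hxy.trans (hud y)))
    (isMinOn_of_eq_csInf_image (hbdd y') (hy'.symm.trans (hud y'))) hbetween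

/-- If `x ∈ R₁*(D,Ω,u)`, `y ∈ D` with `u x + dist x y = u^d y`, and `γ` is a
constant-speed geodesic from `x` to `y`, then for every `x' ∈ R₁*(D,Ω,u)` on the image of
`γ` one has `u x' - u x = dist x' x`. -/
theorem contact_set_along_geodesic {X : Type*} [MetricSpace X]
    (Ω D : Set X) (hΩ : Bornology.IsBounded Ω) (hD : D.Nonempty)
    (u : X → ℝ) (hu : Continuous u)
    (hbdd : ∀ y : X, BddBelow ((fun z => u z + dist z y) '' closure Ω))
    (ud : X → ℝ) (hud : ∀ y, ud y = sInf ((fun z => u z + dist z y) '' closure Ω))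
    (x y : X)
    (hx : x ∈ {x | x ∈ closure Ω ∧ ∃ y' ∈ D, ud y' = u x + dist x y'})
    (hy : y ∈ D) (hxy : u x + dist x y = ud y)
    (γ : ℝ → X) (hγ0 : γ 0 = x) (hγ1 : γ 1 = y)
    (hγ : ∀ s ∈ Set.Icc (0:ℝ) 1, ∀ t ∈ Set.Icc (0:ℝ) 1,
      dist (γ s) (γ t) = |s - t| * dist (γ 0) (γ 1)) :
    ∀ x' ∈ {x | x ∈ closure Ω ∧ ∃ y' ∈ D, ud y' = u x + dist x y'},
      (∃ t ∈ Set.Icc (0:ℝ) 1, x' = γ t) → u x' - u x = dist x' x :=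
  contact_set_along_geodesic_general Ω D u hbdd ud hud x y hx hxy γ hγ0 hγ1 hγ
end

section
/- Let (X,d) be a metric space, Ω ⊂ X bounded, D ⊂ X nonempty, u continuous, t > 0, and let u^d(y) := inf_{z ∈ closure(Ω)} (u(z) + d(z,y)). If x ∈ closure(Ω) and y ∈ D satisfy d(x,y) = t and u(x) + d(x,y) = u^d(y), then x also minimizes z ↦ u(z) + d(z,y)²/(2t) over closure(Ω), i.e. u(x) + d(x,y)²/(2t) = inf_{z ∈ closure(Ω)} ( u(z) + d(z,y)²/(2t) ). -/
/-- If `x ∈ closure Ω` and `y ∈ D` satisfy `dist x y = t` and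
`u x + dist x y = u^d y = inf_{closure Ω}(u + dist · y)`, then `x` also minimizes the
quadratic cost: `u x + dist x y ^ 2 / (2t) = inf_{z ∈ closure Ω} (u z + dist z y ^ 2 / (2t))`. -/
theorem linear_contact_implies_quadratic_contact {X : Type*} [MetricSpace X]
    (Ω D : Set X) (hΩ : Bornology.IsBounded Ω) (hD : D.Nonempty)
    (u : X → ℝ) (hu : ContinuousOn u (closure Ω))
    (hbdd : ∀ y : X, BddBelow ((fun z => u z + dist z y) '' closure Ω))
    (t : ℝ) (ht : 0 < t) (x y : X) (hx : x ∈ closure Ω) (hy : y ∈ D)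
    (hdist : dist x y = t)
    (hmin : u x + dist x y = sInf ((fun z => u z + dist z y) '' closure Ω)) :
    u x + dist x y ^ 2 / (2 * t)
      = sInf ((fun z => u z + dist z y ^ 2 / (2 * t)) '' closure Ω) := by
  have hval : u x + dist x y ^ 2 / (2 * t) = u x + t / 2 := by
    rw [hdist]; ring_nf; field_simp
  have hkey : ∀ z ∈ closure Ω, u x + t / 2 ≤ u z + dist z y ^ 2 / (2 * t) := by
    intro z hz
    have h1 : u x + dist x y ≤ u z + dist z y :=
      hmin ▸ csInf_le (hbdd y) ⟨z, hz, rfl⟩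
    have h2 : dist z y - t / 2 ≤ dist z y ^ 2 / (2 * t) := by
      have := sq_nonneg (dist z y - t)
      rw [le_div_iff₀ (by positivity)]
      nlinarith
    rw [hdist] at h1; linarith
  have hlb : ∀ w ∈ (fun z => u z + dist z y ^ 2 / (2 * t)) '' closure Ω,
      u x + t / 2 ≤ w := by
    rintro w ⟨z, hz, rfl⟩; exact hkey z hz
  apply le_antisymm
  · rw [hval]
    exact le_csInf ⟨_, ⟨x, hx, rfl⟩⟩ hlb
  · exact csInf_le ⟨_, hlb⟩ ⟨x, hx, rfl⟩
end

section
/- Let (X,d) be a metric space, Ω ⊂ X bounded, D ⊂ X compact, u continuous on closure(Ω), t > 0. Define v(y) := inf_{z ∈ closure(Ω)} ( u(z) + d(z,y)²/(2t) ) for y ∈ D and v(y) := −∞ otherwise, and φ(x) := inf_{y ∈ D} ( −t·v(y) + d(x,y)²/2 ). Then φ(x) = −t·u(x) for every x in the 2-contact set R₂(D,Ω,u,t) := { x ∈ closure(Ω) : ∃ y ∈ D, inf_{closure(Ω)}(u + d(·,y)²/(2t)) = u(x) + d(x,y)²/(2t) }, and φ(x) ≥ −t·u(x) for every x ∈ Ω.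 -/
open Set

/-! Multiplying `v y ≤ u x + d(x,y)²/(2t)` by `-t` gives `-t·u x ≤ -t·v y + d(x,y)²/2` for every
`x ∈ closure Ω`, so `-t·u` is a lower bound for every value of the c-transform `φ` there. At a
point of the 2-contact set one `y ∈ D` turns this inequality into an equality, so the bound is
attained and `φ x` is the least element of the set whose infimum defines it. -/

lemma neg_mul_add_div_two_mul_add_half {t : ℝ} (ht : t ≠ 0) (a s : ℝ) :
    -t * (a + s / (2 * t)) + s / 2 = -t * a := by
  field_simp
  ring

lemma neg_mul_le_neg_mul_add_half_of_le {t a b s : ℝ} (ht : 0 < t) (h : b ≤ a + s / (2 * t)) :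
    -t * a ≤ -t * b + s / 2 := by
  have := mul_le_mul_of_nonpos_left h (neg_nonpos.2 ht.le)
  linarith [neg_mul_add_div_two_mul_add_half ht.ne' a s]

lemma neg_mul_le_c_transform_term {X : Type*} [MetricSpace X] {K : Set X} {u v : X → ℝ}
    {t : ℝ} (ht : 0 < t) {x y : X} (hx : x ∈ K)
    (hbdd : BddBelow ((fun z => u z + dist z y ^ 2 / (2 * t)) '' K))
    (hv : v y = sInf ((fun z => u z + dist z y ^ 2 / (2 * t)) '' K)) :
    -t * u x ≤ -t * v y + dist x y ^ 2 / 2 :=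
  neg_mul_le_neg_mul_add_half_of_le ht (hv ▸ csInf_le hbdd ⟨x, hx, rfl⟩)

theorem c_concave_representative_two_contact_general {X : Type*} [MetricSpace X]
    (Ω D : Set X)
    (hD : D.Nonempty)
    (u : X → ℝ) (t : ℝ) (ht : 0 < t)
    (hbdd : ∀ y : X, BddBelow ((fun z => u z + dist z y ^ 2 / (2 * t)) '' closure Ω))
    (v : X → ℝ)
    (hv : ∀ y ∈ D, v y = sInf ((fun z => u z + dist z y ^ 2 / (2 * t)) '' closure Ω))
    (φ : X → ℝ)
    (hφ : ∀ x, φ x = sInf ((fun y => -t * v y + dist x y ^ 2 / 2) '' D)) :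
    (∀ x ∈ {x | x ∈ closure Ω ∧ ∃ y ∈ D,
        sInf ((fun z => u z + dist z y ^ 2 / (2 * t)) '' closure Ω)
          = u x + dist x y ^ 2 / (2 * t)},
      φ x = -t * u x) ∧
    (∀ x ∈ Ω, -t * u x ≤ φ x) := by
  have lower_bound : ∀ x ∈ closure Ω,
      -t * u x ∈ lowerBounds ((fun y => -t * v y + dist x y ^ 2 / 2) '' D) := fun x hx =>
    forall_mem_image.2 fun y hy => neg_mul_le_c_transform_term ht hx (hbdd y) (hv y hy)
  refine ⟨?_, fun x hx => ?_⟩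
  · rintro x ⟨hx, y, hy, hcontact⟩
    rw [hφ x]
    refine IsLeast.csInf_eq ⟨⟨y, hy, ?_⟩, lower_bound x hx⟩
    simp only [hv y hy, hcontact, neg_mul_add_div_two_mul_add_half ht.ne']
  · rw [hφ x]
    exact le_csInf (hD.image _) (lower_bound x (subset_closure hx))

/-- With `v(y) := inf_{z ∈ closure Ω}(u z + dist z y²/(2t))` for `y ∈ D` and
`φ(x) := inf_{y ∈ D}(-t v(y) + dist x y²/2)` (the c-transform of `t·v`), the function
`φ` equals `-t·u` on the 2-contact set `R₂(D,Ω,u,t)` and dominates `-t·u` on `Ω`. -/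
theorem c_concave_representative_two_contact {X : Type*} [MetricSpace X]
    (Ω D : Set X) (hΩ : Bornology.IsBounded Ω) (hΩne : Ω.Nonempty)
    (hD : D.Nonempty) (hDc : IsCompact D)
    (u : X → ℝ) (hu : ContinuousOn u (closure Ω)) (t : ℝ) (ht : 0 < t)
    (hbdd : ∀ y : X, BddBelow ((fun z => u z + dist z y ^ 2 / (2 * t)) '' closure Ω))
    (v : X → ℝ)
    (hv : ∀ y ∈ D, v y = sInf ((fun z => u z + dist z y ^ 2 / (2 * t)) '' closure Ω))
    (φ : X → ℝ)
    (hφ : ∀ x, φ x = sInf ((fun y => -t * v y + dist x y ^ 2 / 2) '' D)) :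
    (∀ x ∈ {x | x ∈ closure Ω ∧ ∃ y ∈ D,
        sInf ((fun z => u z + dist z y ^ 2 / (2 * t)) '' closure Ω)
          = u x + dist x y ^ 2 / (2 * t)},
      φ x = -t * u x) ∧
    (∀ x ∈ Ω, -t * u x ≤ φ x) :=
  c_concave_representative_two_contact_general Ω D hD u t ht hbdd v hv φ hφ
end

section
/- Let (X,d) be a compact metric space, μ, ν probability measures on X. Suppose φ : X → ℝ is continuous and φ^c(y) := inf_x ( d(x,y)²/2 − φ(x) ). If a coupling Π of μ and ν is supported in the set ∂^c φ := { (x,y) : φ(x) + φ^c(y) = d(x,y)²/2 }, then Π is optimal for the quadratic cost, i.e. ∫ d(x,y)²/2 dΠ = (1/2)W₂²(μ,ν), and moreover (1/2)W₂²(μ,ν) = ∫ φ dμ + ∫ φ^c dν. -/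
/-!
Since `φ x + φ^c y ≤ c x y` for all `x, y`, integrating against any coupling `Q` of `μ` and `ν`
gives the weak duality bound `∫ φ dμ + ∫ φ^c dν ≤ ∫ c dQ`; on the c-superdifferential the
inequality is an equality, so a coupling concentrated there attains the bound. Compactness makes
`φ^c` continuous, hence every function involved is integrable.
-/

open MeasureTheory Set

noncomputable def cTransform {X Y : Type*} (c : X → Y → ℝ) (φ : X → ℝ) (y : Y) : ℝ :=
  sInf (range fun x => c x y - φ x)

section cTransform

variable {X Y : Type*} [TopologicalSpace X] [CompactSpace X] {c : X → Y → ℝ} {φ : X → ℝ}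

theorem add_cTransform_le (hc : ∀ y, Continuous fun x => c x y) (hφ : Continuous φ)
    (x : X) (y : Y) : φ x + cTransform c φ y ≤ c x y := by
  have hbdd : BddBelow (range fun x => c x y - φ x) :=
    (isCompact_range ((hc y).sub hφ)).bddBelow
  have h : cTransform c φ y ≤ c x y - φ x := csInf_le hbdd (mem_range_self x)
  linarith

theorem continuous_cTransform [TopologicalSpace Y] (hc : Continuous ↿c) (hφ : Continuous φ) :
    Continuous (cTransform c φ) := by
  have h := isCompact_univ.continuous_sInf (f := fun y x => c x y - φ x)
    ((hc.comp continuous_swap).sub (hφ.comp continuous_snd))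
  simp only [image_univ] at h
  exact h

end cTransform

section Duality

variable {X Y : Type*} [TopologicalSpace X] [CompactSpace X] [MeasurableSpace X]
  [OpensMeasurableSpace X] [TopologicalSpace Y] [CompactSpace Y] [MeasurableSpace Y]
  [OpensMeasurableSpace Y] {f : X → ℝ} {g : Y → ℝ} (Q : Measure (X × Y)) [IsFiniteMeasure Q]

theorem integral_add_eq_integral_map_fst_add_integral_map_snd (hf : Continuous f)
    (hg : Continuous g) :
    ∫ p, (f p.1 + g p.2) ∂Q = ∫ x, f x ∂Q.map Prod.fst + ∫ y, g y ∂Q.map Prod.snd := by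
  have hfi : Integrable (fun p : X × Y => f p.1) Q :=
    (hf.integrable_of_hasCompactSupport (HasCompactSupport.of_compactSpace f)).comp_measurable
      measurable_fst
  have hgi : Integrable (fun p : X × Y => g p.2) Q :=
    (hg.integrable_of_hasCompactSupport (HasCompactSupport.of_compactSpace g)).comp_measurable
      measurable_snd
  rw [integral_add hfi hgi,
    integral_map measurable_fst.aemeasurable hf.aestronglyMeasurable,
    integral_map measurable_snd.aemeasurable hg.aestronglyMeasurable]

variable [OpensMeasurableSpace (X × Y)] {c : X → Y → ℝ}

theorem integral_map_fst_add_integral_map_snd_le (hf : Continuous f) (hg : Continuous g)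
    (hc : Continuous ↿c) (hfg : ∀ x y, f x + g y ≤ c x y) :
    ∫ x, f x ∂Q.map Prod.fst + ∫ y, g y ∂Q.map Prod.snd ≤ ∫ p, c p.1 p.2 ∂Q := by
  rw [← integral_add_eq_integral_map_fst_add_integral_map_snd Q hf hg]
  refine integral_mono ?_ ?_ fun p => hfg p.1 p.2
  · exact ((hf.comp continuous_fst).add (hg.comp continuous_snd)).integrable_of_hasCompactSupport
      (HasCompactSupport.of_compactSpace _)
  · exact hc.integrable_of_hasCompactSupport (HasCompactSupport.of_compactSpace _)

end Duality

theorem fundamental_theorem_of_optimal_transport_general {X : Type*} [MetricSpace X]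
    [CompactSpace X] [MeasurableSpace X] [BorelSpace X]
    (μ ν : Measure X)
    (φ : X → ℝ) (hφ : Continuous φ)
    (φc : X → ℝ)
    (hφc : ∀ y, φc y = sInf (Set.range fun x => dist x y ^ 2 / 2 - φ x))
    (P : Measure (X × X)) [IsProbabilityMeasure P]
    (hfst : P.map Prod.fst = μ) (hsnd : P.map Prod.snd = ν)
    (hsupp : P {p : X × X | φ p.1 + φc p.2 = dist p.1 p.2 ^ 2 / 2}ᶜ = 0) :
    (∫ p, dist p.1 p.2 ^ 2 ∂P)
        = sInf ((fun P' : Measure (X × X) => ∫ p, dist p.1 p.2 ^ 2 ∂P') ''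
            {P' | IsProbabilityMeasure P' ∧ P'.map Prod.fst = μ ∧ P'.map Prod.snd = ν}) ∧
    (sInf ((fun P' : Measure (X × X) => ∫ p, dist p.1 p.2 ^ 2 ∂P') ''
            {P' | IsProbabilityMeasure P' ∧ P'.map Prod.fst = μ ∧ P'.map Prod.snd = ν})) / 2
      = (∫ x, φ x ∂μ) + ∫ y, φc y ∂ν := by
  set c : X → X → ℝ := fun x y => dist x y ^ 2 / 2
  have hc : Continuous ↿c := (continuous_dist.pow 2).div_const 2
  obtain rfl : φc = cTransform c φ := funext hφc
  have hφc_cont := continuous_cTransform hc hφ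
  set D := (∫ x, φ x ∂μ) + ∫ y, cTransform c φ y ∂ν
  have hlow : ∀ Q ∈ {P' : Measure (X × X) | IsProbabilityMeasure P' ∧ P'.map Prod.fst = μ ∧
      P'.map Prod.snd = ν}, 2 * D ≤ ∫ p, dist p.1 p.2 ^ 2 ∂Q := by
    rintro Q ⟨hQ, rfl, rfl⟩
    have h := integral_map_fst_add_integral_map_snd_le Q hφ hφc_cont hc
      (add_cTransform_le (fun y => hc.comp (.prodMk_left y)) hφ)
    rw [integral_div] at h
    linarith
  have hP : ∫ p, dist p.1 p.2 ^ 2 ∂P = 2 * D := by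
    have h := integral_congr_ae (ae_iff.2 hsupp)
    rw [integral_add_eq_integral_map_fst_add_integral_map_snd P hφ hφc_cont, hfst, hsnd,
      integral_div] at h
    linarith
  have hmin : sInf ((fun P' : Measure (X × X) => ∫ p, dist p.1 p.2 ^ 2 ∂P') ''
      {P' | IsProbabilityMeasure P' ∧ P'.map Prod.fst = μ ∧ P'.map Prod.snd = ν}) = 2 * D :=
    IsLeast.csInf_eq ⟨⟨P, ⟨inferInstance, hfst, hsnd⟩, hP⟩, by
      rintro _ ⟨Q, hQ, rfl⟩
      exact hlow Q hQ⟩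
  exact ⟨hP.trans hmin.symm, by rw [hmin]; ring⟩

/-- (b) ⇒ (a) in the fundamental theorem of optimal transport: on a compact
metric space, if a coupling `P` of `μ` and `ν` is concentrated on the c-superdifferential
`∂^c φ = {(x,y) : φ x + φ^c y = dist x y²/2}` of a continuous function `φ`, then `P` is
optimal for the quadratic cost and the Kantorovich dual value is attained:
`(1/2) W₂²(μ,ν) = ∫ φ dμ + ∫ φ^c dν`. -/
theorem fundamental_theorem_of_optimal_transport {X : Type*} [MetricSpace X]
    [CompactSpace X] [Nonempty X] [MeasurableSpace X] [BorelSpace X]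
    (μ ν : Measure X) [IsProbabilityMeasure μ] [IsProbabilityMeasure ν]
    (φ : X → ℝ) (hφ : Continuous φ)
    (φc : X → ℝ)
    (hφc : ∀ y, φc y = sInf (Set.range fun x => dist x y ^ 2 / 2 - φ x))
    (P : Measure (X × X)) [IsProbabilityMeasure P]
    (hfst : P.map Prod.fst = μ) (hsnd : P.map Prod.snd = ν)
    (hsupp : P {p : X × X | φ p.1 + φc p.2 = dist p.1 p.2 ^ 2 / 2}ᶜ = 0) :
    (∫ p, dist p.1 p.2 ^ 2 ∂P)
        = sInf ((fun P' : Measure (X × X) => ∫ p, dist p.1 p.2 ^ 2 ∂P') ''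
            {P' | IsProbabilityMeasure P' ∧ P'.map Prod.fst = μ ∧ P'.map Prod.snd = ν}) ∧
    (sInf ((fun P' : Measure (X × X) => ∫ p, dist p.1 p.2 ^ 2 ∂P') ''
            {P' | IsProbabilityMeasure P' ∧ P'.map Prod.fst = μ ∧ P'.map Prod.snd = ν})) / 2
      = (∫ x, φ x ∂μ) + ∫ y, φc y ∂ν :=
  fundamental_theorem_of_optimal_transport_general μ ν φ hφ φc hφc P hfst hsnd hsupp
end
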